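/- arXiv:1204.5610 — 6 statements merged into one kernel-verified Lean document; each statement's English description precedes it below -/
import Mathlib

section
/- Let p, q be complex n×n matrices satisfying pp* − qq* = 1_n and pqᵗ = qpᵗ (so that [[p, q],[q̄, p̄]] is in Sp(n,ℝ)_ℂ, and then also p*p − qᵗq̄ = 1_n and pᵗq̄ = q*p). Let W be a complex symmetric n×n matrix such that q̄W + p̄ and Wq* + p* are invertible, and set W₁ = (pW + q)(q̄W + p̄)⁻¹. Then W₁ = (Wq* + p*)⁻¹(qᵗ + Wpᵗ), W₁ is symmetric, and 1_n − W₁W̄₁ = (Wq* + p*)⁻¹(1_n − WW̄)(qW̄ + p)⁻¹. In particular, if W ∈ D_n then W₁ ∈ D_n. -/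
/-!
With `M = [[p, q], [q̄, p̄]]`, the hypotheses say that `[[p*, -qᵀ], [-q*, pᵀ]]` is a right inverse
of `M`, hence also a left inverse; this gives the dual relations. Put `A = W q* + p*` and
`Y = qᵀ + W pᵀ`. For every `W` the four relations give `A (p W + q) = Y (q̄ W + p̄)` and
`A A* - Y Y* = 1 - W W*`. For symmetric `W` one has `q̄ W + p̄ = Aᵀ` and `W̄ = W*`, so
`W₁ = A⁻¹ Y` is symmetric and `1 - W₁ W̄₁ = A⁻¹ (1 - W W*) (A⁻¹)*` is a congruence of `1 - W W̄`.
-/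

open Matrix ComplexConjugate
open scoped ComplexOrder

namespace Matrix

variable {m n R : Type*}

section CommSemiring

variable [CommSemiring R] [StarRing R] (A : Matrix m n R)

@[simp] lemma conjTranspose_map_starRingEnd : Aᴴ.map conj = Aᵀ := by
  ext; simp [starRingEnd_apply]

@[simp] lemma transpose_map_starRingEnd : Aᵀ.map conj = Aᴴ := by
  ext; simp [starRingEnd_apply]

@[simp] lemma map_starRingEnd_map_starRingEnd : (A.map conj).map conj = A := by
  ext; simp

@[simp] lemma conjTranspose_transpose_eq_map_starRingEnd : Aᴴᵀ = A.map conj := rfl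

@[simp] lemma transpose_conjTranspose_eq_map_starRingEnd : Aᵀᴴ = A.map conj := rfl

lemma map_starRingEnd_eq_conjTranspose_of_transpose_eq {A : Matrix n n R} (h : Aᵀ = A) :
    A.map conj = Aᴴ := by
  rw [← transpose_map_starRingEnd, h]

end CommSemiring

section Inverse

variable [Fintype n] [DecidableEq n] [CommRing R]

lemma mul_nonsing_inv_eq_nonsing_inv_mul {A B X Y : Matrix n n R} (hA : IsUnit A)
    (hB : IsUnit B) (h : A * X = Y * B) : X * B⁻¹ = A⁻¹ * Y :=
  calc X * B⁻¹ = A⁻¹ * (A * X) * B⁻¹ := by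
        rw [nonsing_inv_mul_cancel_left A X ((isUnit_iff_isUnit_det A).1 hA)]
    _ = A⁻¹ * Y := by
        rw [h, ← mul_assoc, mul_nonsing_inv_cancel_right B _ ((isUnit_iff_isUnit_det B).1 hB)]

end Inverse

section CommRing

variable [Fintype n] [DecidableEq n] [CommRing R] [StarRing R] {p q : Matrix n n R}

theorem symplectic_dual_relations (h1 : p * pᴴ - q * qᴴ = 1) (h2 : p * qᵀ = q * pᵀ) :
    pᴴ * p - qᵀ * q.map conj = 1 ∧ pᵀ * q.map conj = qᴴ * p := by
  have h1c := congrArg (starRingEnd R).mapMatrix h1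
  have h2c := congrArg (starRingEnd R).mapMatrix h2
  rw [map_sub, map_mul, map_mul, map_one] at h1c
  rw [map_mul, map_mul] at h2c
  simp only [RingHom.mapMatrix_apply, conjTranspose_map_starRingEnd,
    transpose_map_starRingEnd] at h1c h2c
  have hMN : fromBlocks p q (q.map conj) (p.map conj) * fromBlocks pᴴ (-qᵀ) (-qᴴ) pᵀ = 1 := by
    rw [fromBlocks_multiply, ← fromBlocks_one, fromBlocks_inj]
    refine ⟨?_, ?_, ?_, ?_⟩
    · rw [← h1]; noncomm_ring
    · rw [mul_neg, h2, neg_add_cancel]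
    · rw [mul_neg, h2c, add_neg_cancel]
    · rw [← h1c]; noncomm_ring
  have hNM := mul_eq_one_comm.1 hMN
  rw [fromBlocks_multiply, ← fromBlocks_one, fromBlocks_inj] at hNM
  obtain ⟨h11, -, h21, -⟩ := hNM
  exact ⟨by rw [← h11]; noncomm_ring, by rw [← sub_eq_zero, ← h21]; noncomm_ring⟩

theorem symplectic_dual_relations_conj (h3 : pᴴ * p - qᵀ * q.map conj = 1)
    (h4 : pᵀ * q.map conj = qᴴ * p) :
    pᵀ * p.map conj - qᴴ * q = 1 ∧ pᴴ * q = qᵀ * p.map conj := by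
  have h3c := congrArg (starRingEnd R).mapMatrix h3
  have h4c := congrArg (starRingEnd R).mapMatrix h4
  rw [map_sub, map_mul, map_mul, map_one] at h3c
  rw [map_mul, map_mul] at h4c
  simp only [RingHom.mapMatrix_apply, conjTranspose_map_starRingEnd,
    transpose_map_starRingEnd, map_starRingEnd_map_starRingEnd] at h3c h4c
  exact ⟨h3c, h4c⟩

theorem mul_add_eq_transpose_add_mul (h3 : pᴴ * p - qᵀ * q.map conj = 1)
    (h4 : pᵀ * q.map conj = qᴴ * p) (W : Matrix n n R) :
    (W * qᴴ + pᴴ) * (p * W + q) = (qᵀ + W * pᵀ) * (q.map conj * W + p.map conj) := by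
  obtain ⟨h3c, h4c⟩ := symplectic_dual_relations_conj h3 h4
  linear_combination (norm := noncomm_ring) -W * h4 * W - W * h3c + h3 * W + h4c

theorem mul_conjTranspose_sub_mul_conjTranspose (h3 : pᴴ * p - qᵀ * q.map conj = 1)
    (h4 : pᵀ * q.map conj = qᴴ * p) (W : Matrix n n R) :
    (W * qᴴ + pᴴ) * (W * qᴴ + pᴴ)ᴴ - (qᵀ + W * pᵀ) * (qᵀ + W * pᵀ)ᴴ = 1 - W * Wᴴ := by
  obtain ⟨h3c, h4c⟩ := symplectic_dual_relations_conj h3 h4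
  simp only [conjTranspose_add, conjTranspose_mul, conjTranspose_conjTranspose,
    transpose_conjTranspose_eq_map_starRingEnd]
  linear_combination (norm := noncomm_ring) -W * h3c * Wᴴ - W * h4 + h4c * Wᴴ + h3

lemma one_sub_mul_conjTranspose_of_nonsing_inv_mul {A : Matrix n n R} (hA : IsUnit A)
    (Y : Matrix n n R) :
    1 - A⁻¹ * Y * (A⁻¹ * Y)ᴴ = A⁻¹ * (A * Aᴴ - Y * Yᴴ) * A⁻¹ᴴ := by
  have hA' := (isUnit_iff_isUnit_det A).1 hA
  rw [mul_sub, sub_mul, nonsing_inv_mul_cancel_left A _ hA', ← conjTranspose_mul,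
    nonsing_inv_mul A hA', conjTranspose_one, conjTranspose_mul]
  simp only [mul_assoc]

end CommRing

end Matrix

/-- The fractional linear action of Sp(n,ℝ)_ℂ preserves the Siegel ball. -/
theorem stmt_11 (n : ℕ) (p q : Matrix (Fin n) (Fin n) ℂ)
    (h1 : p * pᴴ - q * qᴴ = 1) (h2 : p * qᵀ = q * pᵀ)
    (W : Matrix (Fin n) (Fin n) ℂ) (hW : Wᵀ = W)
    (hinv1 : IsUnit (q.map (starRingEnd ℂ) * W + p.map (starRingEnd ℂ)))
    (hinv2 : IsUnit (W * qᴴ + pᴴ))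
    (W₁ : Matrix (Fin n) (Fin n) ℂ)
    (hW₁ : W₁ = (p * W + q) * (q.map (starRingEnd ℂ) * W + p.map (starRingEnd ℂ))⁻¹) :
    pᴴ * p - qᵀ * q.map (starRingEnd ℂ) = 1 ∧
    pᵀ * q.map (starRingEnd ℂ) = qᴴ * p ∧
    W₁ = (W * qᴴ + pᴴ)⁻¹ * (qᵀ + W * pᵀ) ∧
    W₁ᵀ = W₁ ∧
    1 - W₁ * W₁.map (starRingEnd ℂ)
      = (W * qᴴ + pᴴ)⁻¹ * (1 - W * W.map (starRingEnd ℂ))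
        * (q * W.map (starRingEnd ℂ) + p)⁻¹ ∧
    ((1 - W * W.map (starRingEnd ℂ)).PosDef →
      (1 - W₁ * W₁.map (starRingEnd ℂ)).PosDef) := by
  obtain ⟨h3, h4⟩ := symplectic_dual_relations h1 h2
  set A := W * qᴴ + pᴴ
  have hW₁' : W₁ = A⁻¹ * (qᵀ + W * pᵀ) :=
    hW₁.trans (mul_nonsing_inv_eq_nonsing_inv_mul hinv2 hinv1
      (mul_add_eq_transpose_add_mul h3 h4 W))
  have hsymm : W₁ᵀ = W₁ := by
    have hB : q.map conj * W + p.map conj = Aᵀ := by simp [A, hW]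
    conv_lhs => rw [hW₁', transpose_mul, transpose_nonsing_inv, ← hB]
    rw [hW₁]
    congr 1
    simp [hW, add_comm]
  have hdisc : 1 - W₁ * W₁.map conj = A⁻¹ * (1 - W * W.map conj) * A⁻¹ᴴ := by
    rw [map_starRingEnd_eq_conjTranspose_of_transpose_eq hsymm,
      map_starRingEnd_eq_conjTranspose_of_transpose_eq hW,
      ← mul_conjTranspose_sub_mul_conjTranspose h3 h4 W, hW₁']
    exact one_sub_mul_conjTranspose_of_nonsing_inv_mul hinv2 _
  have hAinv : A⁻¹ᴴ = (q * W.map conj + p)⁻¹ := by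
    simp [A, conjTranspose_nonsing_inv, map_starRingEnd_eq_conjTranspose_of_transpose_eq hW]
  refine ⟨h3, h4, hW₁', hsymm, hAinv ▸ hdisc, fun hpos => ?_⟩
  rw [hdisc, ← star_eq_conjTranspose]
  exact (IsUnit.posDef_star_right_conjugate_iff (isUnit_nonsing_inv_iff.2 hinv2)).2 hpos
end

section
/- Let p, q be complex n×n matrices satisfying pp* − qq* = 1_n and pqᵗ = qpᵗ (hence also p*p − qᵗq̄ = 1_n and pᵗq̄ = q*p). Let W ∈ D_n, let α, z ∈ ℂⁿ, and assume q̄W + p̄ and Wq* + p* are invertible. Define W₁ = (pW + q)(q̄W + p̄)⁻¹, z₁ = (Wq* + p*)⁻¹(z + α − W ᾱ), η = (1_n − W W̄)⁻¹(z + W z̄), and η₁ = (1_n − W₁W̄₁)⁻¹(z₁ + W₁ z̄₁). Then η₁ = p(η + α) + q(η̄ + ᾱ). That is, under the FC-change of variables the Jacobi group action becomes the affine action (η, W) ↦ (p(η + α) + q(η̄ + ᾱ), (pW + q)(q̄W + p̄)⁻¹). -/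
open Matrix
open scoped ComplexOrder

namespace Stmt13Aux

local notation "𝕔" => starRingEnd ℂ

variable {n : ℕ}

lemma map_map_self (M : Matrix (Fin n) (Fin n) ℂ) : (M.map 𝕔).map 𝕔 = M := by
  ext i j; simp

@[simp] lemma map_comp_self (M : Matrix (Fin n) (Fin n) ℂ) :
    M.map (⇑𝕔 ∘ ⇑𝕔) = M := by
  ext i j; simp

lemma mapc_conjT (M : Matrix (Fin n) (Fin n) ℂ) : Mᴴ.map 𝕔 = Mᵀ := by
  ext i j; simp [Matrix.conjTranspose_apply]

lemma mapc_T (M : Matrix (Fin n) (Fin n) ℂ) : Mᵀ.map 𝕔 = Mᴴ := by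
  ext i j; simp [Matrix.conjTranspose_apply]

lemma mapc_sub (M N : Matrix (Fin n) (Fin n) ℂ) :
    (M - N).map 𝕔 = M.map 𝕔 - N.map 𝕔 :=
  Matrix.map_sub _ (fun _ _ => by simp) _ _

lemma mapc_add (M N : Matrix (Fin n) (Fin n) ℂ) :
    (M + N).map 𝕔 = M.map 𝕔 + N.map 𝕔 :=
  Matrix.map_add _ (fun _ _ => by simp) _ _

lemma mapc_one : (1 : Matrix (Fin n) (Fin n) ℂ).map 𝕔 = 1 :=
  Matrix.map_one _ (map_zero _) (map_one _)

lemma star_mulVec' (M : Matrix (Fin n) (Fin n) ℂ) (v : Fin n → ℂ) :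
    star (M.mulVec v) = (M.map 𝕔).mulVec (star v) := by
  ext i
  simp [Matrix.mulVec, dotProduct, map_sum]

lemma isUnit_mapc {M : Matrix (Fin n) (Fin n) ℂ} (h : IsUnit M) : IsUnit (M.map 𝕔) := by
  rcases h.exists_right_inv with ⟨B, hB⟩
  have : M.map 𝕔 * B.map 𝕔 = 1 := by rw [← Matrix.map_mul, hB, mapc_one]
  letI := invertibleOfRightInverse _ _ this
  exact isUnit_of_invertible _

lemma inv_mapc {M : Matrix (Fin n) (Fin n) ℂ} (h : IsUnit M) :
    (M⁻¹).map 𝕔 = (M.map 𝕔)⁻¹ := by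
  have hd : IsUnit M.det := (Matrix.isUnit_iff_isUnit_det M).mp h
  symm
  apply Matrix.inv_eq_right_inv
  rw [← Matrix.map_mul, Matrix.mul_nonsing_inv _ hd, mapc_one]

lemma mulVec_cancel {M : Matrix (Fin n) (Fin n) ℂ} (h : IsUnit M) {u v : Fin n → ℂ}
    (huv : M.mulVec u = M.mulVec v) : u = v := by
  have hd := (Matrix.isUnit_iff_isUnit_det M).mp h
  have h2 := congrArg (M⁻¹.mulVec ·) huv
  simpa [Matrix.mulVec_mulVec, Matrix.nonsing_inv_mul _ hd] using h2

lemma symplectic_ids (p q : Matrix (Fin n) (Fin n) ℂ)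
    (h1 : p * pᴴ - q * qᴴ = 1) (h2 : p * qᵀ = q * pᵀ) :
    pᴴ * p - qᵀ * q.map 𝕔 = 1 ∧ pᴴ * q = qᵀ * p.map 𝕔 ∧
      pᵀ * q.map 𝕔 = qᴴ * p ∧ pᵀ * p.map 𝕔 - qᴴ * q = 1 := by
  have h1c : p.map 𝕔 * pᵀ - q.map 𝕔 * qᵀ = 1 := by
    have h := congrArg (fun M : Matrix (Fin n) (Fin n) ℂ => M.map 𝕔) h1
    simpa [mapc_sub, Matrix.map_mul, mapc_conjT, mapc_one] using h
  have h2c : p.map 𝕔 * qᴴ = q.map 𝕔 * pᴴ := by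
    have h := congrArg (fun M : Matrix (Fin n) (Fin n) ℂ => M.map 𝕔) h2
    simpa [Matrix.map_mul, mapc_T] using h
  have hgh : Matrix.fromBlocks p q (q.map 𝕔) (p.map 𝕔) *
      Matrix.fromBlocks pᴴ (-qᵀ) (-qᴴ) pᵀ = 1 := by
    rw [Matrix.fromBlocks_multiply, ← Matrix.fromBlocks_one, Matrix.fromBlocks_inj]
    refine ⟨?_, ?_, ?_, ?_⟩
    · rw [mul_neg, ← sub_eq_add_neg]; exact h1
    · rw [mul_neg, h2, neg_add_cancel]
    · rw [mul_neg, h2c, add_neg_cancel]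
    · rw [mul_neg, neg_add_eq_sub]; exact h1c
  have hhg := mul_eq_one_comm.mp hgh
  rw [Matrix.fromBlocks_multiply, ← Matrix.fromBlocks_one, Matrix.fromBlocks_inj] at hhg
  obtain ⟨e1, e2, e3, e4⟩ := hhg
  rw [neg_mul, ← sub_eq_add_neg] at e1
  rw [neg_mul, add_neg_eq_zero] at e2
  rw [neg_mul, neg_add_eq_zero] at e3
  rw [neg_mul, neg_add_eq_sub] at e4
  exact ⟨e1, e2, e3.symm, e4⟩

end Stmt13Aux

open Stmt13Aux

/-- Under the FC-change of variables the Jacobi group action on the Siegel-Jacobi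
ball becomes the affine action η ↦ p(η+α) + q(η̄+ᾱ). -/
theorem stmt_13 (n : ℕ) (p q : Matrix (Fin n) (Fin n) ℂ)
    (h1 : p * pᴴ - q * qᴴ = 1) (h2 : p * qᵀ = q * pᵀ)
    (W : Matrix (Fin n) (Fin n) ℂ) (hW : Wᵀ = W)
    (hpos : (1 - W * W.map (starRingEnd ℂ)).PosDef)
    (α z : Fin n → ℂ)
    (hinv1 : IsUnit (q.map (starRingEnd ℂ) * W + p.map (starRingEnd ℂ)))
    (hinv2 : IsUnit (W * qᴴ + pᴴ))
    (W₁ : Matrix (Fin n) (Fin n) ℂ)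
    (hW₁ : W₁ = (p * W + q) * (q.map (starRingEnd ℂ) * W + p.map (starRingEnd ℂ))⁻¹)
    (z₁ : Fin n → ℂ)
    (hz₁ : z₁ = (W * qᴴ + pᴴ)⁻¹.mulVec (z + α - W.mulVec (star α)))
    (η η₁ : Fin n → ℂ)
    (hη : η = (1 - W * W.map (starRingEnd ℂ))⁻¹.mulVec (z + W.mulVec (star z)))
    (hη₁ : η₁ = (1 - W₁ * W₁.map (starRingEnd ℂ))⁻¹.mulVec (z₁ + W₁.mulVec (star z₁))) :
    η₁ = p.mulVec (η + α) + q.mulVec (star η + star α) := by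
  obtain ⟨I1, I2, I3, I4⟩ := symplectic_ids p q h1 h2
  have J1 : pᴴ * p = 1 + qᵀ * q.map (starRingEnd ℂ) := sub_eq_iff_eq_add.mp I1
  have J4 : qᴴ * q = pᵀ * p.map (starRingEnd ℂ) - 1 := by
    rw [sub_eq_iff_eq_add.mp I4]; abel
  set A := q.map (starRingEnd ℂ) * W + p.map (starRingEnd ℂ) with hAdef
  set B := W * qᴴ + pᴴ with hBdef
  have hAd : IsUnit A.det := (Matrix.isUnit_iff_isUnit_det A).mp hinv1
  have hBd : IsUnit B.det := (Matrix.isUnit_iff_isUnit_det B).mp hinv2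
  have hE : IsUnit (1 - W * W.map (starRingEnd ℂ)) := hpos.isUnit
  have hEd : IsUnit (1 - W * W.map (starRingEnd ℂ)).det :=
    (Matrix.isUnit_iff_isUnit_det _).mp hE
  have hC : IsUnit (A.map (starRingEnd ℂ)) := isUnit_mapc hinv1
  have hCd : IsUnit (A.map (starRingEnd ℂ)).det := (Matrix.isUnit_iff_isUnit_det _).mp hC
  have hAc : A.map (starRingEnd ℂ) = q * W.map (starRingEnd ℂ) + p := by
    rw [hAdef, mapc_add, Matrix.map_mul, map_map_self, map_map_self]
  -- key matrix identities
  have M1 : B * p - (W * pᵀ + qᵀ) * q.map (starRingEnd ℂ) = 1 := by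
    calc B * p - (W * pᵀ + qᵀ) * q.map (starRingEnd ℂ)
        = W * (qᴴ * p) + pᴴ * p - (W * (pᵀ * q.map (starRingEnd ℂ))
          + qᵀ * q.map (starRingEnd ℂ)) := by
          rw [hBdef]; noncomm_ring
      _ = 1 := by rw [← I3, J1]; abel
  have M2 : B * q - (W * pᵀ + qᵀ) * p.map (starRingEnd ℂ) = -W := by
    calc B * q - (W * pᵀ + qᵀ) * p.map (starRingEnd ℂ)
        = W * (qᴴ * q) + pᴴ * q - (W * (pᵀ * p.map (starRingEnd ℂ))
          + qᵀ * p.map (starRingEnd ℂ)) := by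
          rw [hBdef]; noncomm_ring
      _ = -W := by rw [J4, I2]; noncomm_ring
  have key : B * (p * W + q) = (W * pᵀ + qᵀ) * A := by
    calc B * (p * W + q)
        = W * (qᴴ * p) * W + W * (qᴴ * q) + (pᴴ * p) * W + pᴴ * q := by
          rw [hBdef]; noncomm_ring
      _ = W * (pᵀ * q.map (starRingEnd ℂ)) * W
          + W * (pᵀ * p.map (starRingEnd ℂ) - 1)
          + (1 + qᵀ * q.map (starRingEnd ℂ)) * W
          + qᵀ * p.map (starRingEnd ℂ) := by rw [← I3, J4, J1, I2]
      _ = (W * pᵀ + qᵀ) * A := by rw [hAdef]; noncomm_ring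
  have L2 : B * W₁ = W * pᵀ + qᵀ := by
    rw [hW₁, ← mul_assoc, key, mul_assoc, Matrix.mul_nonsing_inv _ hAd, mul_one]
  -- conjugate of W₁
  have hWc : W₁.map (starRingEnd ℂ) * A.map (starRingEnd ℂ)
      = p.map (starRingEnd ℂ) * W.map (starRingEnd ℂ) + q.map (starRingEnd ℂ) := by
    rw [hW₁, Matrix.map_mul, inv_mapc hinv1, mul_assoc,
      Matrix.nonsing_inv_mul _ hCd, mul_one, mapc_add, Matrix.map_mul]
  have keyE : B * (q * W.map (starRingEnd ℂ) + p)
      - (W * pᵀ + qᵀ) * (p.map (starRingEnd ℂ) * W.map (starRingEnd ℂ)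
        + q.map (starRingEnd ℂ)) = 1 - W * W.map (starRingEnd ℂ) := by
    calc B * (q * W.map (starRingEnd ℂ) + p)
          - (W * pᵀ + qᵀ) * (p.map (starRingEnd ℂ) * W.map (starRingEnd ℂ)
            + q.map (starRingEnd ℂ))
        = W * (qᴴ * q) * W.map (starRingEnd ℂ) + W * (qᴴ * p)
          + (pᴴ * q) * W.map (starRingEnd ℂ) + pᴴ * p
          - (W * (pᵀ * p.map (starRingEnd ℂ)) * W.map (starRingEnd ℂ)
            + W * (pᵀ * q.map (starRingEnd ℂ))
            + (qᵀ * p.map (starRingEnd ℂ)) * W.map (starRingEnd ℂ)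
            + qᵀ * q.map (starRingEnd ℂ)) := by
          rw [hBdef]; noncomm_ring
      _ = 1 - W * W.map (starRingEnd ℂ) := by
          rw [J4, ← I3, I2, J1]; noncomm_ring
  have hFC : B * (1 - W₁ * W₁.map (starRingEnd ℂ)) * A.map (starRingEnd ℂ)
      = 1 - W * W.map (starRingEnd ℂ) := by
    have h₁ : B * (1 - W₁ * W₁.map (starRingEnd ℂ)) * A.map (starRingEnd ℂ)
        = B * A.map (starRingEnd ℂ)
          - (B * W₁) * (W₁.map (starRingEnd ℂ) * A.map (starRingEnd ℂ)) := by
      noncomm_ring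
    rw [h₁, L2, hWc, hAc]
    exact keyE
  have hF : IsUnit (1 - W₁ * W₁.map (starRingEnd ℂ)) := by
    have hBinv : IsUnit B⁻¹ := by
      letI := invertibleOfRightInverse _ _ (Matrix.nonsing_inv_mul _ hBd)
      exact isUnit_of_invertible _
    have hCinv : IsUnit (A.map (starRingEnd ℂ))⁻¹ := by
      letI := invertibleOfRightInverse _ _ (Matrix.nonsing_inv_mul _ hCd)
      exact isUnit_of_invertible _
    have e : B⁻¹ * (B * (1 - W₁ * W₁.map (starRingEnd ℂ)) * A.map (starRingEnd ℂ))
        * (A.map (starRingEnd ℂ))⁻¹ = 1 - W₁ * W₁.map (starRingEnd ℂ) := by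
      rw [mul_assoc B, ← mul_assoc B⁻¹, Matrix.nonsing_inv_mul _ hBd, one_mul,
        mul_assoc, Matrix.mul_nonsing_inv _ hCd, mul_one]
    rw [← e, hFC]
    exact (hBinv.mul hE).mul hCinv
  have hFd : IsUnit (1 - W₁ * W₁.map (starRingEnd ℂ)).det :=
    (Matrix.isUnit_iff_isUnit_det _).mp hF
  -- vector part
  have h5 : η - (W * W.map (starRingEnd ℂ)).mulVec η = z + W.mulVec (star z) := by
    have h : (1 - W * W.map (starRingEnd ℂ)).mulVec η = z + W.mulVec (star z) := by
      rw [hη, Matrix.mulVec_mulVec, Matrix.mul_nonsing_inv _ hEd, Matrix.one_mulVec]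
    rwa [Matrix.sub_mulVec, Matrix.one_mulVec] at h
  have h6 : star η - (W.map (starRingEnd ℂ) * W).mulVec (star η)
      = star z + (W.map (starRingEnd ℂ)).mulVec z := by
    have h := congrArg star h5
    simpa [star_sub, star_add, star_mulVec', Matrix.map_mul, map_map_self,
      map_comp_self, star_star] using h
  have hzη : z = η - W.mulVec (star η) := by
    have hkey : (1 - W * W.map (starRingEnd ℂ)).mulVec
        (η - W.mulVec (star η) - z) = 0 := by
      rw [Matrix.sub_mulVec, Matrix.one_mulVec]
      have exp : (η - W.mulVec (star η) - z)
          - (W * W.map (starRingEnd ℂ)).mulVec (η - W.mulVec (star η) - z)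
          = (η - (W * W.map (starRingEnd ℂ)).mulVec η)
            - W.mulVec ((star η) - (W.map (starRingEnd ℂ) * W).mulVec (star η))
            - (z - (W * W.map (starRingEnd ℂ)).mulVec z) := by
        simp only [Matrix.mulVec_sub, Matrix.mulVec_mulVec, ← mul_assoc]
        abel
      rw [exp, h5, h6]
      simp only [Matrix.mulVec_add, Matrix.mulVec_mulVec]
      abel
    have hd : η - W.mulVec (star η) - z = 0 :=
      mulVec_cancel hE (by rw [hkey, Matrix.mulVec_zero])
    exact (sub_eq_zero.mp hd).symm
  set ξ := p.mulVec (η + α) + q.mulVec (star η + star α) with hξ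
  have hsξ : star ξ = (p.map (starRingEnd ℂ)).mulVec (star η + star α)
      + (q.map (starRingEnd ℂ)).mulVec (η + α) := by
    rw [hξ]
    simp [star_add, star_mulVec', star_star]
  have hBz₁ : B.mulVec z₁ = z + α - W.mulVec (star α) := by
    rw [hz₁, Matrix.mulVec_mulVec, Matrix.mul_nonsing_inv _ hBd, Matrix.one_mulVec]
  have haz : B.mulVec (ξ - W₁.mulVec (star ξ)) = z + α - W.mulVec (star α) := by
    calc B.mulVec (ξ - W₁.mulVec (star ξ))
        = (B * p - (W * pᵀ + qᵀ) * q.map (starRingEnd ℂ)).mulVec (η + α)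
          + (B * q - (W * pᵀ + qᵀ) * p.map (starRingEnd ℂ)).mulVec
            (star η + star α) := by
          rw [Matrix.mulVec_sub, Matrix.mulVec_mulVec, L2, hξ, hsξ]
          simp only [Matrix.mulVec_add, Matrix.sub_mulVec, Matrix.mulVec_mulVec]
          abel
      _ = (1 : Matrix (Fin n) (Fin n) ℂ).mulVec (η + α)
          + (-W).mulVec (star η + star α) := by rw [M1, M2]
      _ = z + α - W.mulVec (star α) := by
          rw [Matrix.one_mulVec, Matrix.neg_mulVec, Matrix.mulVec_add, hzη]
          abel
  have hz₁ξ : z₁ = ξ - W₁.mulVec (star ξ) :=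
    mulVec_cancel hinv2 (hBz₁.trans haz.symm)
  have hsz₁ : star z₁ = star ξ - (W₁.map (starRingEnd ℂ)).mulVec ξ := by
    have h := congrArg star hz₁ξ
    simpa [star_sub, star_mulVec', star_star] using h
  have collapse : (ξ - W₁.mulVec (star ξ))
      + W₁.mulVec (star ξ - (W₁.map (starRingEnd ℂ)).mulVec ξ)
      = (1 - W₁ * W₁.map (starRingEnd ℂ)).mulVec ξ := by
    simp only [Matrix.mulVec_sub, Matrix.mulVec_mulVec, Matrix.sub_mulVec,
      Matrix.one_mulVec]
    abel
  rw [hη₁, hsz₁, hz₁ξ, collapse, Matrix.mulVec_mulVec,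
    Matrix.nonsing_inv_mul _ hFd, Matrix.one_mulVec]
end

section
/- Let v be in the Siegel upper half plane X_n (so v̄ − v, v + i·1_n and v̄ − i·1_n are invertible), and assume additionally that v − i·1_n is invertible. Then for every u ∈ ℂⁿ there exists a unique η ∈ ℂⁿ with u = (1/(2i))[(v + i·1_n)η − (v − i·1_n)η̄], and it is given by η = (v̄ − i·1_n)(v̄ − v)⁻¹(v − i·1_n)[(v − i·1_n)⁻¹u − (v̄ − i·1_n)⁻¹ū]; conversely this formula for η inverts the map η ↦ u = (1/(2i))[(v + i·1_n)η − (v − i·1_n)η̄]. -/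
open Matrix
open scoped ComplexOrder

/-!
Write `v̄` for the entrywise conjugate of `v` and `D = v̄ - v = -2i · Im v`. Since
`v - i = (v̄ - i) - D`, the formula for `η` collapses to `η = ū + (v̄ - i) D⁻¹ (u - ū)`.
The vector `w = D⁻¹ (u - ū)` is real (conjugation turns `D` into `-D` and `u - ū` into its
negative), and with this both compositions of `η ↦ u` and `u ↦ η` become linear identities in
`u, ū, w` resp. `η, η̄`. The matrices `D` and `v̄ - i` are invertible because their
anti-Hermitian parts are nonzero multiples of the positive definite matrices `Im v` and
`Im v + 1`.
-/

namespace Matrix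

variable {m n : Type*}

lemma star_mulVec_eq_map {R : Type*} [CommSemiring R] [StarRing R] [Fintype n]
    (A : Matrix m n R) (x : n → R) : star (A *ᵥ x) = A.map (starRingEnd R) *ᵥ star x :=
  funext fun i => RingHom.map_mulVec (starRingEnd R) A x i

lemma map_starRingEnd_map_starRingEnd_s15 {R : Type*} [CommSemiring R] [StarRing R]
    (A : Matrix m n R) : (A.map (starRingEnd R)).map (starRingEnd R) = A := by
  ext i j
  simp

variable [Fintype n] [DecidableEq n]

lemma isUnit_of_sub_conjTranspose_eq_smul_posDef {N M : Matrix n n ℂ} {c : ℂ} (hc : c ≠ 0)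
    (hM : M.PosDef) (h : N - Nᴴ = c • M) : IsUnit N := by
  rw [isUnit_iff_isUnit_det, isUnit_iff_ne_zero]
  intro hdet
  obtain ⟨z, hz0, hz⟩ := exists_mulVec_eq_zero_iff.mpr hdet
  have hform : star z ⬝ᵥ ((N - Nᴴ) *ᵥ z) = 0 := by
    rw [sub_mulVec, dotProduct_sub, hz, dotProduct_mulVec, ← star_mulVec, hz]
    simp
  rw [h, smul_mulVec, dotProduct_smul, smul_eq_mul] at hform
  exact mul_ne_zero hc (hM.dotProduct_mulVec_pos hz0).ne' hform

lemma mul_inv_mul_mulVec_inv_sub_inv {K : Type*} [CommRing K] {A B D : Matrix n n K}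
    (hA : IsUnit A) (hB : IsUnit B) (hD : IsUnit D) (hAB : A - B = D) (x y : n → K) :
    (A * D⁻¹ * B) *ᵥ (B⁻¹ *ᵥ x - A⁻¹ *ᵥ y) = y + (A * D⁻¹) *ᵥ (x - y) := by
  rw [isUnit_iff_isUnit_det] at hA hB hD
  have hcancel : A * D⁻¹ * B * A⁻¹ = A * D⁻¹ - 1 := by
    rw [← sub_sub_cancel A B, hAB, mul_sub, sub_mul, Matrix.mul_assoc _ A, mul_nonsing_inv _ hA,
      mul_one, Matrix.mul_assoc A, nonsing_inv_mul _ hD, mul_one, mul_nonsing_inv _ hA]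
  rw [mulVec_sub, mulVec_mulVec, mulVec_mulVec, hcancel, Matrix.mul_assoc,
    mul_nonsing_inv _ hB, mul_one, sub_mulVec, one_mulVec, mulVec_sub]
  abel

section Siegel

variable (v : Matrix n n ℂ)

noncomputable def siegelMap (η : n → ℂ) : n → ℂ :=
  (2 * Complex.I)⁻¹ • ((v + Complex.I • 1) *ᵥ η - (v - Complex.I • 1) *ᵥ star η)

noncomputable def siegelMapInv (u : n → ℂ) : n → ℂ :=
  star u + ((v.map (starRingEnd ℂ) - Complex.I • 1) * (v.map (starRingEnd ℂ) - v)⁻¹) *ᵥ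
    (u - star u)

variable {v}

lemma isUnit_map_starRingEnd_sub_self (hv : vᵀ = v)
    (hpos : ((2 * Complex.I)⁻¹ • (v - v.map (starRingEnd ℂ))).PosDef) :
    IsUnit (v.map (starRingEnd ℂ) - v) := by
  have hvH : vᴴ = v.map (starRingEnd ℂ) := by rw [conjTranspose, hv]; rfl
  refine isUnit_of_sub_conjTranspose_eq_smul_posDef (c := -(4 * Complex.I)) (by simp) hpos ?_
  rw [conjTranspose_sub, hvH, ← hvH, conjTranspose_conjTranspose, smul_smul,
    show -(4 * Complex.I) * (2 * Complex.I)⁻¹ = -2 by field_simp; ring]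
  module

lemma isUnit_map_starRingEnd_sub_I_smul_one (hv : vᵀ = v)
    (hpos : ((2 * Complex.I)⁻¹ • (v - v.map (starRingEnd ℂ))).PosDef) :
    IsUnit (v.map (starRingEnd ℂ) - Complex.I • 1) := by
  have hvH : vᴴ = v.map (starRingEnd ℂ) := by rw [conjTranspose, hv]; rfl
  refine isUnit_of_sub_conjTranspose_eq_smul_posDef (c := -(2 * Complex.I)) (by simp)
    (hpos.add_posSemidef PosSemidef.one) ?_
  rw [conjTranspose_sub, conjTranspose_smul, conjTranspose_one, ← hvH,
    conjTranspose_conjTranspose, Complex.star_def, Complex.conj_I, hvH, smul_add, smul_smul,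
    neg_mul, mul_inv_cancel₀ (by simp)]
  module

lemma star_inv_mulVec_sub_star (hD : IsUnit (v.map (starRingEnd ℂ) - v)) (u : n → ℂ) :
    star ((v.map (starRingEnd ℂ) - v)⁻¹ *ᵥ (u - star u)) =
      (v.map (starRingEnd ℂ) - v)⁻¹ *ᵥ (u - star u) := by
  set w := (v.map (starRingEnd ℂ) - v)⁻¹ *ᵥ (u - star u)
  have hDw : (v.map (starRingEnd ℂ) - v) *ᵥ w = u - star u := by
    rw [mulVec_mulVec, mul_nonsing_inv _ ((isUnit_iff_isUnit_det _).mp hD), one_mulVec]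
  apply mulVec_injective_iff_isUnit.mpr hD
  have hstar := congrArg star hDw
  rw [star_mulVec_eq_map, Matrix.map_sub _ (map_sub _), map_starRingEnd_map_starRingEnd_s15,
    star_sub, star_star] at hstar
  rw [hDw, ← neg_sub v, neg_mulVec, hstar, neg_sub]

lemma siegelMap_siegelMapInv (hD : IsUnit (v.map (starRingEnd ℂ) - v)) (u : n → ℂ) :
    siegelMap v (siegelMapInv v u) = u := by
  rw [siegelMap, siegelMapInv, inv_smul_eq_iff₀ (by simp), ← mulVec_mulVec]
  have hreal := star_inv_mulVec_sub_star hD u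
  set w := (v.map (starRingEnd ℂ) - v)⁻¹ *ᵥ (u - star u)
  have hDw : v.map (starRingEnd ℂ) *ᵥ w - v *ᵥ w = u - star u := by
    rw [← sub_mulVec, mulVec_mulVec, mul_nonsing_inv _ ((isUnit_iff_isUnit_det _).mp hD),
      one_mulVec]
  have hvDw := congrArg (v *ᵥ ·) hDw
  simp only [mulVec_sub] at hvDw
  clear_value w
  simp only [add_mulVec, sub_mulVec, smul_mulVec, one_mulVec, star_add, star_sub, star_star,
    star_smul, star_mulVec_eq_map, map_starRingEnd_map_starRingEnd_s15, hreal, mulVec_add,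
    mulVec_sub, mulVec_smul, Complex.star_def, Complex.conj_I]
  linear_combination (norm := module) hvDw + Complex.I • hDw

lemma siegelMapInv_siegelMap (hD : IsUnit (v.map (starRingEnd ℂ) - v)) (η : n → ℂ) :
    siegelMapInv v (siegelMap v η) = η := by
  have hw : (v.map (starRingEnd ℂ) - v)⁻¹ *ᵥ (siegelMap v η - star (siegelMap v η)) =
      (2 * Complex.I)⁻¹ • (star η - η) := by
    apply mulVec_injective_iff_isUnit.mpr hD
    rw [mulVec_mulVec, mul_nonsing_inv _ ((isUnit_iff_isUnit_det _).mp hD), one_mulVec,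
      siegelMap]
    simp only [add_mulVec, sub_mulVec, smul_mulVec, one_mulVec, star_add, star_sub, star_star,
      star_smul, star_mulVec_eq_map, mulVec_sub, mulVec_smul, Complex.star_def, Complex.conj_I,
      map_inv₀, map_mul, map_ofNat]
    module
  rw [siegelMapInv, ← mulVec_mulVec, hw, siegelMap]
  simp only [add_mulVec, sub_mulVec, smul_mulVec, one_mulVec, star_add, star_sub, star_star,
    star_smul, star_mulVec_eq_map, mulVec_sub, mulVec_smul, Complex.star_def, Complex.conj_I,
    map_inv₀, map_mul, map_ofNat]
  match_scalars <;> field_simp <;> ring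

end Siegel

end Matrix

/-- On the Siegel upper half plane, the map η ↦ u = (1/2i)[(v+i)η - (v-i)η̄] is a
bijection of ℂⁿ, with inverse given by the FC⁻¹-formula. -/
theorem stmt_15 (n : ℕ) (v : Matrix (Fin n) (Fin n) ℂ) (hv : vᵀ = v)
    (hpos : (((2 * Complex.I)⁻¹) • (v - v.map (starRingEnd ℂ))).PosDef)
    (hinv : IsUnit (v - Complex.I • 1)) :
    ∀ u : Fin n → ℂ,
      (u = ((2 * Complex.I)⁻¹) •
          ((v + Complex.I • 1).mulVec
              (((v.map (starRingEnd ℂ) - Complex.I • 1)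
                * (v.map (starRingEnd ℂ) - v)⁻¹ * (v - Complex.I • 1)).mulVec
                ((v - Complex.I • 1)⁻¹.mulVec u
                  - (v.map (starRingEnd ℂ) - Complex.I • 1)⁻¹.mulVec (star u)))
            - (v - Complex.I • 1).mulVec
              (star (((v.map (starRingEnd ℂ) - Complex.I • 1)
                * (v.map (starRingEnd ℂ) - v)⁻¹ * (v - Complex.I • 1)).mulVec
                ((v - Complex.I • 1)⁻¹.mulVec u
                  - (v.map (starRingEnd ℂ) - Complex.I • 1)⁻¹.mulVec (star u)))))) ∧
      (∀ η : Fin n → ℂ,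
        u = ((2 * Complex.I)⁻¹) •
            ((v + Complex.I • 1).mulVec η - (v - Complex.I • 1).mulVec (star η)) →
        η = ((v.map (starRingEnd ℂ) - Complex.I • 1)
              * (v.map (starRingEnd ℂ) - v)⁻¹ * (v - Complex.I • 1)).mulVec
            ((v - Complex.I • 1)⁻¹.mulVec u
              - (v.map (starRingEnd ℂ) - Complex.I • 1)⁻¹.mulVec (star u))) := by
  have hD := isUnit_map_starRingEnd_sub_self hv hpos
  have hA := isUnit_map_starRingEnd_sub_I_smul_one hv hpos
  intro u
  rw [mul_inv_mul_mulVec_inv_sub_inv hA hinv hD (sub_sub_sub_cancel_right _ _ _)]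
  refine ⟨(siegelMap_siegelMapInv hD u).symm, fun η hη => ?_⟩
  subst hη
  exact (siegelMapInv_siegelMap hD η).symm
end

section
/- Let W be a complex symmetric n×n matrix with 1_n − W W̄ invertible, set M = (1_n − W W̄)⁻¹, let η ∈ ℂⁿ and z = η − W η̄. Then 2 z̄ᵗ M z + zᵗ W̄ M z + z̄ᵗ M W z̄ = 2 η̄ᵗ η − ηᵗ W̄ η − η̄ᵗ W η̄. (Under the FC-change of coordinates, the exponent 2F = 2z̄ᵗMz + zᵗW̄Mz + z̄ᵗMWz̄ of the reproducing kernel becomes 2𝓕 = 2η̄ᵗη − ηᵗW̄η − η̄ᵗWη̄.) -/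
open Matrix

/-- Under the FC-change of coordinates z = η - W η̄, the exponent of the
reproducing kernel 2F = 2z̄ᵗMz + zᵗW̄Mz + z̄ᵗMWz̄ becomes 2𝓕 = 2η̄ᵗη - ηᵗW̄η - η̄ᵗWη̄. -/
theorem stmt_16 (n : ℕ) (W : Matrix (Fin n) (Fin n) ℂ) (hW : Wᵀ = W)
    (hinv : IsUnit (1 - W * W.map (starRingEnd ℂ)))
    (M : Matrix (Fin n) (Fin n) ℂ)
    (hM : M = (1 - W * W.map (starRingEnd ℂ))⁻¹)
    (η z : Fin n → ℂ) (hz : z = η - W.mulVec (star η)) :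
    2 * (star z ⬝ᵥ M.mulVec z)
      + z ⬝ᵥ (W.map (starRingEnd ℂ) * M).mulVec z
      + star z ⬝ᵥ (M * W).mulVec (star z)
    = 2 * (star η ⬝ᵥ η)
      - η ⬝ᵥ (W.map (starRingEnd ℂ)).mulVec η
      - star η ⬝ᵥ W.mulVec (star η) := by
  set Wb := W.map (starRingEnd ℂ) with hWbdef
  have hWb : Wbᵀ = Wb := by
    ext i j
    simp only [transpose_apply, hWbdef, Matrix.map_apply]
    rw [show W j i = W i j from (congrFun (congrFun hW i) j).symm ▸ rfl]
  have hd : IsUnit (1 - W * Wb).det := (Matrix.isUnit_iff_isUnit_det _).mp hinv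
  have hMA : M * (1 - W * Wb) = 1 := by rw [hM]; exact Matrix.nonsing_inv_mul _ hd
  have hAM : (1 - W * Wb) * M = 1 := by rw [hM]; exact Matrix.mul_nonsing_inv _ hd
  have h1 : M * (W * Wb) = M - 1 := by
    have h := hMA; rw [mul_sub, mul_one] at h
    rw [← h]; abel
  have h2 : W * Wb * M = M - 1 := by
    have h := hAM; rw [sub_mul, one_mul] at h
    rw [← h]; abel
  have hflip : ∀ (A : Matrix (Fin n) (Fin n) ℂ) (x y : Fin n → ℂ),
      A.mulVec x ⬝ᵥ y = x ⬝ᵥ Aᵀ.mulVec y := fun A x y => by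
    rw [dotProduct_mulVec, vecMul_transpose, dotProduct_comm]
  have hzstar : star z = star η - Wb.mulVec η := by
    rw [hz]; funext i
    simp [Matrix.mulVec, dotProduct, map_sum, hWbdef]
  rw [hzstar, hz]
  simp only [Matrix.mulVec_sub, dotProduct_sub, sub_dotProduct, Matrix.mulVec_mulVec,
    hflip, hW, hWb, transpose_mul, Matrix.mulVec_mulVec]
  have hD : Wb * M * W * Wb = Wb * M - Wb := by
    rw [mul_assoc (Wb * M) W Wb, mul_assoc Wb M (W * Wb), h1, mul_sub, mul_one]
  have hB : M * W * Wb = M - 1 := by rw [mul_assoc]; exact h1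
  simp only [← mul_assoc]
  rw [h2, hB, hD]
  simp only [sub_mul, one_mul, Matrix.sub_mulVec, Matrix.one_mulVec, dotProduct_sub]
  ring
end

section
/- Let A_c, B_c, C_c, D_c ∈ M(n,ℂ) and define A_r = (1/2)(A_c − D_c + B_c − C_c), B_r = (1/(2i))(A_c + D_c − B_c − C_c), C_r = (1/(2i))(A_c + D_c + B_c + C_c), D_r = (1/2)(−A_c + D_c + B_c − C_c). Let v : ℝ → M(n,ℂ) be differentiable with v(t) symmetric and v(t) + i·1_n invertible for all t, and set W(t) = (v(t) − i·1_n)(v(t) + i·1_n)⁻¹. If W satisfies the matrix Riccati equation W′ = A_cW + W D_c + B_c + W C_c W, then v satisfies the matrix Riccati equation v′ = A_r v + v D_r + B_r + v C_r v. (Thus the Cayley transform carries the Riccati equation of motion on the Siegel ball into the Riccati equation of motion on the Siegel upper half plane.) -/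
open Matrix

attribute [local instance] Matrix.normedAddCommGroup Matrix.normedSpace

/-!
Write `u = v + i`, `w = v - i`, so that `W = w u⁻¹ = u⁻¹ w` (`u` and `w` commute). Differentiating
`W u = w` gives `v' = W' u + W v'`, and since `u - u W = u - w = 2i` this yields
`2i v' = u W' u`. Substituting the Riccati equation for `W'` and using `u W = W u = w` turns the
right-hand side into `u A_c w + w D_c u + u B_c u + w C_c w`; expanding with `u = v + i`,
`w = v - i` and dividing by `2i` is exactly the Riccati equation with coefficients `A_r, …, D_r`.
-/

theorem HasDerivAt.matrix_mul {𝕜 R l m n : Type*} [NontriviallyNormedField 𝕜] [NormedRing R]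
    [NormedAlgebra 𝕜 R] [Fintype l] [Fintype m] [Fintype n]
    {f : 𝕜 → Matrix l m R} {g : 𝕜 → Matrix m n R} {f' : Matrix l m R} {g' : Matrix m n R} {t : 𝕜}
    (hf : HasDerivAt f f' t) (hg : HasDerivAt g g' t) :
    HasDerivAt (fun s => f s * g s) (f' * g t + f t * g') t := by
  have hf_entry (i j) : HasDerivAt (fun s => f s i j) (f' i j) t :=
    hasDerivAt_pi.mp (hasDerivAt_pi.mp hf i) j
  have hg_entry (i j) : HasDerivAt (fun s => g s i j) (g' i j) t :=
    hasDerivAt_pi.mp (hasDerivAt_pi.mp hg i) j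
  refine hasDerivAt_pi.mpr fun i => hasDerivAt_pi.mpr fun j => ?_
  simpa [Matrix.mul_apply, Finset.sum_add_distrib] using
    HasDerivAt.fun_sum fun k _ => (hf_entry i k).mul (hg_entry k j)

namespace Matrix

variable {m K : Type*} [Fintype m] [DecidableEq m] [CommRing K]

noncomputable def cayley (c : K) (v : Matrix m m K) : Matrix m m K := (v - c • 1) * (v + c • 1)⁻¹

theorem cayley_mul_add_smul_one {c : K} {v : Matrix m m K} (h : IsUnit (v + c • 1)) :
    cayley c v * (v + c • 1) = v - c • 1 :=
  nonsing_inv_mul_cancel_right _ _ ((isUnit_iff_isUnit_det _).mp h)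

theorem add_smul_one_mul_cayley {c : K} {v : Matrix m m K} (h : IsUnit (v + c • 1)) :
    (v + c • 1) * cayley c v = v - c • 1 := by
  have hv : Commute v (c • 1) := (Commute.one_right v).smul_right c
  have hcomm : Commute (v + c • 1) (v - c • 1) :=
    ((Commute.refl v).sub_right hv).add_left (hv.symm.sub_right (.refl _))
  rw [cayley, ← mul_assoc, hcomm.eq]
  exact mul_nonsing_inv_cancel_right _ _ ((isUnit_iff_isUnit_det _).mp h)

end Matrix

theorem mul_riccati_mul_of_mul_eq {R : Type*} [Ring R] {u w W A B C D : R}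
    (hl : u * W = w) (hr : W * u = w) :
    u * (A * W + W * D + B + W * C * W) * u = u * A * w + w * D * u + u * B * u + w * C * w := by
  have hl' (X : R) : u * (W * X) = w * X := by rw [← mul_assoc, hl]
  simp only [mul_add, add_mul, mul_assoc, hr, hl']

section CayleyDerivative

variable {𝕜 K m : Type*} [NontriviallyNormedField 𝕜] [NormedCommRing K] [NormedAlgebra 𝕜 K]
  [Fintype m] [DecidableEq m] {c : K} {v : 𝕜 → Matrix m m K} {v' W' : Matrix m m K} {t : 𝕜}

open Filter Topology

theorem HasDerivAt.two_smul_eq_of_hasDerivAt_cayley (hv : HasDerivAt v v' t)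
    (hinv : ∀ᶠ s in 𝓝 t, IsUnit (v s + c • 1))
    (hW : HasDerivAt (fun s => cayley c (v s)) W' t) :
    (2 * c) • v' = (v t + c • 1) * W' * (v t + c • 1) := by
  have hprod : HasDerivAt (fun s => v s - c • 1)
      (W' * (v t + c • 1) + cayley c (v t) * v') t :=
    (hW.matrix_mul (hv.add_const _)).congr_of_eventuallyEq
      (hinv.mono fun s hs => (cayley_mul_add_smul_one hs).symm)
  have hderiv := (hv.sub_const _).unique hprod
  calc (2 * c) • v' = ((v t + c • 1) - (v t - c • 1)) * v' := by
        rw [add_sub_sub_cancel, ← add_smul, two_mul, smul_one_mul]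
    _ = (v t + c • 1) * (v' - cayley c (v t) * v') := by
        rw [← add_smul_one_mul_cayley hinv.self_of_nhds, sub_mul, mul_sub, mul_assoc]
    _ = (v t + c • 1) * W' * (v t + c • 1) := by
        rw [sub_eq_of_eq_add hderiv, mul_assoc]

theorem HasDerivAt.two_smul_eq_of_cayley_riccati {A B C D : Matrix m m K}
    (hv : HasDerivAt v v' t) (hinv : ∀ᶠ s in 𝓝 t, IsUnit (v s + c • 1))
    (hW : HasDerivAt (fun s => cayley c (v s))
      (A * cayley c (v t) + cayley c (v t) * D + B + cayley c (v t) * C * cayley c (v t)) t) :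
    (2 * c) • v' = (v t + c • 1) * A * (v t - c • 1) + (v t - c • 1) * D * (v t + c • 1)
      + (v t + c • 1) * B * (v t + c • 1) + (v t - c • 1) * C * (v t - c • 1) := by
  rw [hv.two_smul_eq_of_hasDerivAt_cayley hinv hW, mul_riccati_mul_of_mul_eq
    (add_smul_one_mul_cayley hinv.self_of_nhds) (cayley_mul_add_smul_one hinv.self_of_nhds)]

end CayleyDerivative

open Complex in
theorem riccati_cayley_identity {A : Type*} [Ring A] [Algebra ℂ A] (v Ac Bc Cc Dc : A) :
    (2 * I)⁻¹ • ((v + I • 1) * Ac * (v - I • 1) + (v - I • 1) * Dc * (v + I • 1)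
      + (v + I • 1) * Bc * (v + I • 1) + (v - I • 1) * Cc * (v - I • 1))
    = ((1 / 2 : ℂ) • (Ac - Dc + Bc - Cc)) * v + v * ((1 / 2 : ℂ) • (-Ac + Dc + Bc - Cc))
      + (2 * I)⁻¹ • (Ac + Dc - Bc - Cc) + v * ((2 * I)⁻¹ • (Ac + Dc + Bc + Cc)) * v := by
  simp only [_root_.mul_inv_rev, inv_I]
  simp only [mul_add, add_mul, mul_sub, sub_mul, smul_add, smul_sub, smul_mul_assoc,
    mul_smul_comm, smul_smul, mul_assoc, one_mul, mul_one, neg_mul, mul_neg, smul_neg, neg_smul]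
  match_scalars <;> ring_nf <;> simp only [I_sq, I_pow_three] <;> ring

theorem stmt_18_general (n : ℕ) (Ac Bc Cc Dc Ar Br Cr Dr : Matrix (Fin n) (Fin n) ℂ)
    (hAr : Ar = (1 / 2 : ℂ) • (Ac - Dc + Bc - Cc))
    (hBr : Br = ((2 * Complex.I)⁻¹) • (Ac + Dc - Bc - Cc))
    (hCr : Cr = ((2 * Complex.I)⁻¹) • (Ac + Dc + Bc + Cc))
    (hDr : Dr = (1 / 2 : ℂ) • (-Ac + Dc + Bc - Cc))
    (v : ℝ → Matrix (Fin n) (Fin n) ℂ)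
    (hdiff : Differentiable ℝ v)
    (hinv : ∀ t, IsUnit (v t + Complex.I • 1))
    (hW : ∀ t, HasDerivAt
        (fun s => (v s - Complex.I • 1) * (v s + Complex.I • 1)⁻¹)
        (Ac * ((v t - Complex.I • 1) * (v t + Complex.I • 1)⁻¹)
          + ((v t - Complex.I • 1) * (v t + Complex.I • 1)⁻¹) * Dc + Bc
          + ((v t - Complex.I • 1) * (v t + Complex.I • 1)⁻¹) * Cc
            * ((v t - Complex.I • 1) * (v t + Complex.I • 1)⁻¹)) t) :
    ∀ t, HasDerivAt v (Ar * v t + v t * Dr + Br + v t * Cr * v t) t := by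
  intro t
  have hv := (hdiff t).hasDerivAt
  have hv' := hv.two_smul_eq_of_cayley_riccati (.of_forall hinv) (hW t)
  rwa [hAr, hBr, hCr, hDr, ← riccati_cayley_identity, ← hv', smul_smul,
    inv_mul_cancel₀ (by simp), one_smul]

/-- The Cayley transform carries the matrix Riccati equation of motion on the
Siegel ball into the matrix Riccati equation on the Siegel upper half plane. -/
theorem stmt_18 (n : ℕ) (Ac Bc Cc Dc Ar Br Cr Dr : Matrix (Fin n) (Fin n) ℂ)
    (hAr : Ar = (1 / 2 : ℂ) • (Ac - Dc + Bc - Cc))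
    (hBr : Br = ((2 * Complex.I)⁻¹) • (Ac + Dc - Bc - Cc))
    (hCr : Cr = ((2 * Complex.I)⁻¹) • (Ac + Dc + Bc + Cc))
    (hDr : Dr = (1 / 2 : ℂ) • (-Ac + Dc + Bc - Cc))
    (v : ℝ → Matrix (Fin n) (Fin n) ℂ)
    (hdiff : Differentiable ℝ v)
    (hsym : ∀ t, (v t)ᵀ = v t)
    (hinv : ∀ t, IsUnit (v t + Complex.I • 1))
    (hW : ∀ t, HasDerivAt
        (fun s => (v s - Complex.I • 1) * (v s + Complex.I • 1)⁻¹)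
        (Ac * ((v t - Complex.I • 1) * (v t + Complex.I • 1)⁻¹)
          + ((v t - Complex.I • 1) * (v t + Complex.I • 1)⁻¹) * Dc + Bc
          + ((v t - Complex.I • 1) * (v t + Complex.I • 1)⁻¹) * Cc
            * ((v t - Complex.I • 1) * (v t + Complex.I • 1)⁻¹)) t) :
    ∀ t, HasDerivAt v (Ar * v t + v t * Dr + Br + v t * Cr * v t) t :=
  stmt_18_general n Ac Bc Cc Dc Ar Br Cr Dr hAr hBr hCr hDr v hdiff hinv hW
end

section
/- Let ε ∈ ℂⁿ and let ε₀, ε₋, ε₊ ∈ M(n,ℂ) satisfy the hermiticity conditions ε₀* = ε₀, ε₋ᵗ = ε₋, ε₊ᵗ = ε₊, and ε₊ = conj(ε₋) (equivalently ε₊* = ε₋). Let W : ℝ → M(n,ℂ) and z : ℝ → ℂⁿ be differentiable, with W(t) symmetric and 1_n − W(t)·conj(W(t)) invertible for all t, satisfying the coupled system i W′ = ε₋ + (Wε₀)^s + W ε₊ W and i z′ = ε + W ε̄ + (1/2) ε₀ᵗ z + W ε₊ z, where (A)^s = (A + Aᵗ)/2. Then the function η(t) := (1_n − W W̄)⁻¹(z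 + W z̄) satisfies the decoupled linear equation i η′ = ε + ε₋ η̄ + (1/2) ε₀ᵗ η, whose coefficients do not involve W. (Thus under the FC-transform the motion in η decouples from the Riccati motion on the Siegel ball.) -/
/-!
Write `L_W ξ = ξ + W ξ̄`. When `1 - W W̄` is invertible, `L_W` is injective: `L_W ξ = 0` gives
`ξ = -W ξ̄`, hence `ξ̄ = -W̄ ξ` and `(1 - W W̄) ξ = 0`. For `η = (1 - W W̄)⁻¹ (z + W z̄)` we have
`L_W (η - W η̄) = (1 - W W̄) η = L_W z`, so the FC-transform is inverted by `z = η - W η̄`.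
Differentiating this relation gives `L_W (i η') = i z' + (i W') η̄`, while a direct computation
from the equations of motion gives `L_W (ε + ε₋ η̄ + ½ ε₀ᵗ η) = i z' + (i W') η̄`. Injectivity of
`L_W` identifies `i η'` with the decoupled right-hand side. The derivative `η'` exists because
matrix inversion is differentiable on invertible matrices.
-/

open Matrix

attribute [local instance] Matrix.normedAddCommGroup Matrix.normedSpace

theorem Matrix.star_mulVec_eq_map_s19 {l m R : Type*} [Fintype m] [CommSemiring R] [StarRing R]
    (A : Matrix l m R) (v : m → R) : star (A *ᵥ v) = A.map (starRingEnd R) *ᵥ star v := by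
  rw [star_mulVec, conjTranspose, transpose_map, vecMul_transpose]
  rfl

section Algebra

variable {m K : Type*} [Fintype m] [Field K] [StarRing K]

theorem eq_of_add_mulVec_star_eq [DecidableEq m] {W : Matrix m m K}
    (hW : IsUnit (1 - W * W.map (starRingEnd K))) {x y : m → K}
    (h : x + W *ᵥ star x = y + W *ᵥ star y) : x = y := by
  set d := x - y
  have hd : d = -(W *ᵥ star d) := by
    rw [star_sub, mulVec_sub]
    linear_combination (norm := module) h
  have hstar : star d = -(W.map (starRingEnd K) *ᵥ d) := by
    conv_lhs => rw [hd]
    rw [star_neg, star_mulVec_eq_map_s19, star_star]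
  have hker : (1 - W * W.map (starRingEnd K)) *ᵥ d = 0 := by
    rw [sub_mulVec, one_mulVec, ← mulVec_mulVec, ← neg_neg (W.map _ *ᵥ d), ← hstar, mulVec_neg,
      ← hd, sub_self]
  exact sub_eq_zero.1 (mulVec_injective_iff_isUnit.2 hW (hker.trans (mulVec_zero _).symm))

/-- With `z = η - W η̄` and `W`, `z` moving by the equations of motion, the right-hand side is
`i z' + (i W') η̄`. -/
theorem add_mulVec_star_linearField_eq {ε : m → K} {ε₀ εm εp W : Matrix m m K}
    (h0 : ε₀ᴴ = ε₀) (hmp : εp = εm.map (starRingEnd K)) (hW : Wᵀ = W) (η : m → K) :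
    (ε + εm *ᵥ star η + (1 / 2 : K) • ε₀ᵀ *ᵥ η)
        + W *ᵥ star (ε + εm *ᵥ star η + (1 / 2 : K) • ε₀ᵀ *ᵥ η)
      = (ε + W *ᵥ star ε + (1 / 2 : K) • ε₀ᵀ *ᵥ (η - W *ᵥ star η)
          + (W * εp) *ᵥ (η - W *ᵥ star η))
        + (εm + (1 / 2 : K) • (W * ε₀ + (W * ε₀)ᵀ) + W * εp * W) *ᵥ star η := by
  have hconj0 : ε₀ᵀ.map (starRingEnd K) = ε₀ := h0
  have hhalf : star (1 / 2 : K) = 1 / 2 := by rw [star_div₀, star_one, star_ofNat]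
  rw [transpose_mul, hW]
  simp only [star_add, star_smul, star_mulVec_eq_map_s19, star_star, hconj0, hhalf, ← hmp,
    add_mulVec, smul_mulVec, mulVec_add, mulVec_sub, mulVec_smul, ← mulVec_mulVec]
  module

variable [DecidableEq m]

noncomputable def fcTransform (W : Matrix m m K) (z : m → K) : m → K :=
  (1 - W * W.map (starRingEnd K))⁻¹ *ᵥ (z + W *ᵥ star z)

theorem fcTransform_sub_mulVec_star {W : Matrix m m K}
    (hW : IsUnit (1 - W * W.map (starRingEnd K))) (z : m → K) :
    fcTransform W z - W *ᵥ star (fcTransform W z) = z := by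
  have hη : (1 - W * W.map (starRingEnd K)) *ᵥ fcTransform W z = z + W *ᵥ star z := by
    rw [fcTransform, mulVec_mulVec, mul_nonsing_inv _ ((isUnit_iff_isUnit_det _).1 hW),
      one_mulVec]
  refine eq_of_add_mulVec_star_eq hW ?_
  rw [← hη, star_sub, star_mulVec_eq_map_s19, star_star, mulVec_sub, sub_mulVec, one_mulVec,
    ← mulVec_mulVec]
  abel

end Algebra

section Calculus

variable {l m n α : Type*} [Fintype m] {t : ℝ}

theorem Matrix.hasDerivAt_iff [NormedAddCommGroup α] [NormedSpace ℝ α] [Fintype l] [Fintype n]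
    {A : ℝ → Matrix l n α} {A' : Matrix l n α} :
    HasDerivAt A A' t ↔ ∀ i j, HasDerivAt (fun s => A s i j) (A' i j) t :=
  (hasDerivAt_pi (φ := fun s => (A s : l → n → α))).trans (forall_congr' fun _ => hasDerivAt_pi)

theorem HasDerivAt.matrix_mulVec [NormedRing α] [NormedAlgebra ℝ α] {A : ℝ → Matrix l m α}
    {A' : Matrix l m α} {v : ℝ → m → α} {v' : m → α}
    (hA : HasDerivAt A A' t) (hv : HasDerivAt v v' t) :
    HasDerivAt (fun s => A s *ᵥ v s) (A' *ᵥ v t + A t *ᵥ v') t := by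
  refine hasDerivAt_pi.2 fun i => ?_
  simpa [mulVec, dotProduct, Finset.sum_add_distrib] using HasDerivAt.fun_sum fun j _ =>
    (hasDerivAt_pi.1 (hasDerivAt_pi.1 hA i) j).mul (hasDerivAt_pi.1 hv j)

theorem HasDerivAt.matrix_mul_s19 [NormedRing α] [NormedAlgebra ℝ α] [Fintype l] [Fintype n]
    {A : ℝ → Matrix l m α} {A' : Matrix l m α} {B : ℝ → Matrix m n α} {B' : Matrix m n α}
    (hA : HasDerivAt A A' t) (hB : HasDerivAt B B' t) :
    HasDerivAt (fun s => A s * B s) (A' * B t + A t * B') t := by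
  refine Matrix.hasDerivAt_iff.2 fun i k => ?_
  convert HasDerivAt.fun_sum (u := Finset.univ) fun j _ =>
    (Matrix.hasDerivAt_iff.1 hA i j).fun_mul (Matrix.hasDerivAt_iff.1 hB j k) using 1
  · simp only [mul_apply]
  · simp only [Matrix.add_apply, mul_apply, Finset.sum_add_distrib]

theorem HasDerivAt.matrix_map_star [NormedAddCommGroup α] [NormedSpace ℝ α] [StarAddMonoid α]
    [StarModule ℝ α] [ContinuousStar α] [Fintype l] [Fintype n] {A : ℝ → Matrix l n α}
    {A' : Matrix l n α} (hA : HasDerivAt A A' t) :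
    HasDerivAt (fun s => (A s).map star) (A'.map star) t :=
  Matrix.hasDerivAt_iff.2 fun i j => (Matrix.hasDerivAt_iff.1 hA i j).star

/-- The `L∞`-operator norm makes square matrices a complete normed algebra whose topology is the
entrywise one, so the differentiability of `Ring.inverse` transfers. -/
theorem DifferentiableAt.matrix_inv [NormedCommRing α] [NormedAlgebra ℝ α] [CompleteSpace α]
    [DecidableEq m] {A : ℝ → Matrix m m α} (hA : DifferentiableAt ℝ A t) (hu : IsUnit (A t)) :
    DifferentiableAt ℝ (fun s => (A s)⁻¹) t := by
  simp only [nonsing_inv_eq_ringInverse]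
  exact @DifferentiableAt.inverse ℝ _ ℝ _ _ _ Matrix.linftyOpNormedRing
    (@instHasSummableGeomSeriesOfCompleteSpace _ Matrix.linftyOpNormedRing
      (by exact (inferInstance : CompleteSpace (Matrix m m α))))
    Matrix.linftyOpNormedAlgebra _ _ hA hu

theorem DifferentiableAt.fcTransform {𝕜 : Type*} [RCLike 𝕜] [DecidableEq m]
    {W : ℝ → Matrix m m 𝕜} {z : ℝ → m → 𝕜}
    (hW : DifferentiableAt ℝ W t) (hz : DifferentiableAt ℝ z t)
    (hu : IsUnit (1 - W t * (W t).map (starRingEnd 𝕜))) :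
    DifferentiableAt ℝ (fun s => fcTransform (W s) (z s)) t := by
  have hM : DifferentiableAt ℝ (fun s => 1 - W s * (W s).map (starRingEnd 𝕜)) t :=
    ((hW.hasDerivAt.matrix_mul_s19 hW.hasDerivAt.matrix_map_star).const_sub 1).differentiableAt
  exact ((hM.matrix_inv hu).hasDerivAt.matrix_mulVec
    (hz.hasDerivAt.add (hW.hasDerivAt.matrix_mulVec hz.hasDerivAt.star))).differentiableAt

end Calculus

theorem stmt_19_general (n : ℕ) (ε : Fin n → ℂ) (ε₀ εm εp : Matrix (Fin n) (Fin n) ℂ)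
    (h0 : ε₀ᴴ = ε₀)
    (hmp : εp = εm.map (starRingEnd ℂ))
    (W : ℝ → Matrix (Fin n) (Fin n) ℂ) (W' : ℝ → Matrix (Fin n) (Fin n) ℂ)
    (z z' : ℝ → (Fin n → ℂ))
    (hsym : ∀ t, (W t)ᵀ = W t)
    (hinv : ∀ t, IsUnit (1 - W t * (W t).map (starRingEnd ℂ)))
    (hWd : ∀ t, HasDerivAt W (W' t) t)
    (hWeq : ∀ t, Complex.I • W' t
        = εm + (1 / 2 : ℂ) • (W t * ε₀ + (W t * ε₀)ᵀ) + W t * εp * W t)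
    (hzd : ∀ t, HasDerivAt z (z' t) t)
    (hzeq : ∀ t, Complex.I • z' t
        = ε + (W t).mulVec (star ε) + (1 / 2 : ℂ) • ε₀ᵀ.mulVec (z t)
          + (W t * εp).mulVec (z t)) :
    ∀ t, HasDerivAt
      (fun s => (1 - W s * (W s).map (starRingEnd ℂ))⁻¹.mulVec
          (z s + (W s).mulVec (star (z s))))
      ((-Complex.I) • (ε
        + εm.mulVec (star ((1 - W t * (W t).map (starRingEnd ℂ))⁻¹.mulVec
            (z t + (W t).mulVec (star (z t)))))
        + (1 / 2 : ℂ) • ε₀ᵀ.mulVec ((1 - W t * (W t).map (starRingEnd ℂ))⁻¹.mulVec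
            (z t + (W t).mulVec (star (z t)))))) t := by
  intro t
  set η : ℝ → Fin n → ℂ := fun s => fcTransform (W s) (z s)
  have hzη : z = fun s => η s - W s *ᵥ star (η s) :=
    funext fun s => (fcTransform_sub_mulVec_star (hinv s) (z s)).symm
  obtain ⟨η', hη⟩ : ∃ η', HasDerivAt η η' t :=
    ⟨_, ((hWd t).differentiableAt.fcTransform (hzd t).differentiableAt (hinv t)).hasDerivAt⟩
  have hz' : z' t = η' - (W' t *ᵥ star (η t) + W t *ᵥ star η') := by
    refine (hzd t).unique ?_
    rw [hzη]
    exact hη.sub ((hWd t).matrix_mulVec hη.star)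
  have key : Complex.I • η' + W t *ᵥ star (Complex.I • η')
      = (ε + εm *ᵥ star (η t) + (1 / 2 : ℂ) • ε₀ᵀ *ᵥ η t)
        + W t *ᵥ star (ε + εm *ᵥ star (η t) + (1 / 2 : ℂ) • ε₀ᵀ *ᵥ η t) := by
    rw [add_mulVec_star_linearField_eq h0 hmp (hsym t), ← hWeq, ← congrFun hzη t, ← hzeq, hz',
      star_smul, mulVec_smul, smul_mulVec]
    simp only [Complex.star_def, Complex.conj_I]
    module
  show HasDerivAt η (-Complex.I • (ε + εm *ᵥ star (η t) + (1 / 2 : ℂ) • ε₀ᵀ *ᵥ η t)) t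
  rwa [← eq_of_add_mulVec_star_eq (hinv t) key, smul_smul, neg_mul, Complex.I_mul_I, neg_neg,
    one_smul]

/-- Under the FC-transform η = (1 - W W̄)⁻¹(z + W z̄), the coupled equations of
motion on the Siegel-Jacobi ball decouple: η satisfies the linear equation
i η' = ε + ε₋ η̄ + (1/2) ε₀ᵀ η, whose coefficients do not involve W. -/
theorem stmt_19 (n : ℕ) (ε : Fin n → ℂ) (ε₀ εm εp : Matrix (Fin n) (Fin n) ℂ)
    (h0 : ε₀ᴴ = ε₀) (hm : εmᵀ = εm) (hpt : εpᵀ = εp)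
    (hmp : εp = εm.map (starRingEnd ℂ))
    (W : ℝ → Matrix (Fin n) (Fin n) ℂ) (W' : ℝ → Matrix (Fin n) (Fin n) ℂ)
    (z z' : ℝ → (Fin n → ℂ))
    (hsym : ∀ t, (W t)ᵀ = W t)
    (hinv : ∀ t, IsUnit (1 - W t * (W t).map (starRingEnd ℂ)))
    (hWd : ∀ t, HasDerivAt W (W' t) t)
    (hWeq : ∀ t, Complex.I • W' t
        = εm + (1 / 2 : ℂ) • (W t * ε₀ + (W t * ε₀)ᵀ) + W t * εp * W t)
    (hzd : ∀ t, HasDerivAt z (z' t) t)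
    (hzeq : ∀ t, Complex.I • z' t
        = ε + (W t).mulVec (star ε) + (1 / 2 : ℂ) • ε₀ᵀ.mulVec (z t)
          + (W t * εp).mulVec (z t)) :
    ∀ t, HasDerivAt
      (fun s => (1 - W s * (W s).map (starRingEnd ℂ))⁻¹.mulVec
          (z s + (W s).mulVec (star (z s))))
      ((-Complex.I) • (ε
        + εm.mulVec (star ((1 - W t * (W t).map (starRingEnd ℂ))⁻¹.mulVec
            (z t + (W t).mulVec (star (z t)))))
        + (1 / 2 : ℂ) • ε₀ᵀ.mulVec ((1 - W t * (W t).map (starRingEnd ℂ))⁻¹.mulVec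
            (z t + (W t).mulVec (star (z t)))))) t :=
  stmt_19_general n ε ε₀ εm εp h0 hmp W W' z z' hsym hinv hWd hWeq hzd hzeq
end
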